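/- Let G be a finite directed graph with nonnegative capacities, fixed nodes s, t, and arc e = (x, y). Construct G' by adding to G two new arcs (x, s) and (s, x) and two new arcs (y, t) and (t, y), each with capacity M strictly greater than the sum of all capacities of G. Then every minimum s-t cut (S, T) of G' satisfies x ∈ S and y ∈ T, i.e., it crosses e; moreover its capacity equals the minimum capacity over all s-t cuts of G with x ∈ S and y ∈ T. -/

import Mathlib

/-!
Each added arc of capacity `M` leaves `S` exactly when `x ∉ S` (the arc `(s, x)`) or `y ∈ S`
(the arc `(y, t)`), so an s-t cut of `G'` not crossing `e` costs at least `M`. On a cut crossing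
`e` no added arc leaves `S`, so its capacities in `G` and `G'` agree; the crossing cut `{s, x}`
then costs less than `M` in `G'`. Hence minimum cuts of `G'` cross `e`, and minimising over
crossing cuts gives the same value in `G` and `G'`.
-/

open Finset

/-- Capacity of the s-t cut determined by `S` (arcs from `S` to its complement). -/
def cutCap {V : Type*} [Fintype V] [DecidableEq V] (c : V → V → ℝ) (S : Finset V) : ℝ :=
  ∑ x ∈ S, ∑ y ∈ Sᶜ, c x y

/-- Minimum capacity of an s-t cut. -/
noncomputable def minCut {V : Type*} [Fintype V] [DecidableEq V] (c : V → V → ℝ)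
    (s t : V) : ℝ :=
  sInf {r | ∃ S : Finset V, s ∈ S ∧ t ∉ S ∧ r = cutCap c S}

/-- The graph with arc `e` deleted (its capacity set to `0`). -/
def delArc {V : Type*} [DecidableEq V] (c : V → V → ℝ) (e : V × V) : V → V → ℝ :=
  fun x y => if (x, y) = e then 0 else c x y

/-- Minimum capacity among s-t cuts crossed by the arc `e`. -/
noncomputable def minCutCross {V : Type*} [Fintype V] [DecidableEq V] (c : V → V → ℝ)
    (s t : V) (e : V × V) : ℝ :=
  sInf {r | ∃ S : Finset V, s ∈ S ∧ t ∉ S ∧ e.1 ∈ S ∧ e.2 ∉ S ∧ r = cutCap c S}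

section Cuts

variable {V : Type*} [Fintype V] [DecidableEq V]

theorem cutCap_congr {c d : V → V → ℝ} {S : Finset V}
    (h : ∀ a ∈ S, ∀ b ∉ S, c a b = d a b) : cutCap c S = cutCap d S :=
  sum_congr rfl fun a ha => sum_congr rfl fun b hb => h a ha b (mem_compl.mp hb)

theorem le_cutCap {c : V → V → ℝ} (hc : ∀ a b, 0 ≤ c a b) {S : Finset V} {a b : V}
    (ha : a ∈ S) (hb : b ∉ S) : c a b ≤ cutCap c S :=
  calc c a b ≤ ∑ b' ∈ Sᶜ, c a b' := single_le_sum (fun b' _ => hc a b') (mem_compl.mpr hb)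
    _ ≤ cutCap c S := single_le_sum (f := fun a' => ∑ b' ∈ Sᶜ, c a' b')
        (fun a' _ => sum_nonneg fun b' _ => hc a' b') ha

theorem cutCap_le_sum {c : V → V → ℝ} (hc : ∀ a b, 0 ≤ c a b) (S : Finset V) :
    cutCap c S ≤ ∑ a : V, ∑ b : V, c a b :=
  calc cutCap c S ≤ ∑ a ∈ S, ∑ b : V, c a b :=
        sum_le_sum fun a _ => sum_le_sum_of_subset_of_nonneg (subset_univ _) fun b _ _ => hc a b
    _ ≤ ∑ a : V, ∑ b : V, c a b :=
        sum_le_sum_of_subset_of_nonneg (subset_univ S) fun a _ _ => sum_nonneg fun b _ => hc a b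

theorem minCut_le_cutCap (c : V → V → ℝ) {s t : V} {S : Finset V} (hs : s ∈ S) (ht : t ∉ S) :
    minCut c s t ≤ cutCap c S :=
  csInf_le ((Set.finite_range (cutCap c)).subset (by rintro _ ⟨S, -, -, rfl⟩; exact ⟨S, rfl⟩)
    |>.bddBelow) ⟨S, hs, ht, rfl⟩

theorem exists_cutCap_eq_minCut (c : V → V → ℝ) {s t : V} (hst : s ≠ t) :
    ∃ S : Finset V, s ∈ S ∧ t ∉ S ∧ cutCap c S = minCut c s t := by
  have hfin : {r | ∃ S : Finset V, s ∈ S ∧ t ∉ S ∧ r = cutCap c S}.Finite :=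
    (Set.finite_range (cutCap c)).subset (by rintro _ ⟨S, -, -, rfl⟩; exact ⟨S, rfl⟩)
  have hne : {r | ∃ S : Finset V, s ∈ S ∧ t ∉ S ∧ r = cutCap c S}.Nonempty :=
    ⟨_, {s}, mem_singleton_self s, by simpa using hst.symm, rfl⟩
  obtain ⟨S, hs, ht, hS⟩ := hne.csInf_mem hfin
  exact ⟨S, hs, ht, hS.symm⟩

theorem minCutCross_le_cutCap (c : V → V → ℝ) {s t : V} {e : V × V} {S : Finset V}
    (hs : s ∈ S) (ht : t ∉ S) (hx : e.1 ∈ S) (hy : e.2 ∉ S) :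
    minCutCross c s t e ≤ cutCap c S :=
  csInf_le ((Set.finite_range (cutCap c)).subset
    (by rintro _ ⟨S, -, -, -, -, rfl⟩; exact ⟨S, rfl⟩) |>.bddBelow) ⟨S, hs, ht, hx, hy, rfl⟩

theorem minCut_eq_minCutCross_of_minCuts_cross {c c' : V → V → ℝ} {s t x y : V} (hst : s ≠ t)
    (hcap : ∀ S : Finset V, s ∈ S → t ∉ S → x ∈ S → y ∉ S → cutCap c' S = cutCap c S)
    (hmin : ∀ S : Finset V, s ∈ S → t ∉ S → cutCap c' S = minCut c' s t → x ∈ S ∧ y ∉ S) :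
    minCut c' s t = minCutCross c s t (x, y) := by
  obtain ⟨Sm, hs, ht, hSm⟩ := exists_cutCap_eq_minCut c' hst
  obtain ⟨hx, hy⟩ := hmin Sm hs ht hSm
  refine le_antisymm (le_csInf ⟨_, Sm, hs, ht, hx, hy, rfl⟩ ?_) ?_
  · rintro _ ⟨S, hs', ht', hx', hy', rfl⟩
    exact (minCut_le_cutCap c' hs' ht').trans (hcap S hs' ht' hx' hy').le
  · rw [← hSm, hcap Sm hs ht hx hy]
    exact minCutCross_le_cutCap c hs ht hx hy

end Cuts

section HighArcs

variable {V : Type*} [DecidableEq V]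

def withHighArcs (c : V → V → ℝ) (s t x y : V) (M : ℝ) : V → V → ℝ := fun a b =>
  if (a, b) = (x, s) ∨ (a, b) = (s, x) ∨ (a, b) = (y, t) ∨ (a, b) = (t, y) then M else c a b

theorem withHighArcs_nonneg {c : V → V → ℝ} (hc : ∀ a b, 0 ≤ c a b) (s t x y : V) {M : ℝ}
    (hM : 0 ≤ M) (a b : V) : 0 ≤ withHighArcs c s t x y M a b := by
  unfold withHighArcs
  split
  · exact hM
  · exact hc a b

theorem cutCap_withHighArcs_of_cross [Fintype V] (c : V → V → ℝ) {s t x y : V} (M : ℝ)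
    {S : Finset V} (hs : s ∈ S) (ht : t ∉ S) (hx : x ∈ S) (hy : y ∉ S) :
    cutCap (withHighArcs c s t x y M) S = cutCap c S := by
  refine cutCap_congr fun a ha b hb => if_neg ?_
  rintro (h | h | h | h) <;> simp only [Prod.mk.injEq] at h <;> obtain ⟨rfl, rfl⟩ := h
  exacts [hb hs, hb hx, hy ha, ht ha]

theorem le_cutCap_withHighArcs_of_not_cross [Fintype V] {c : V → V → ℝ} (hc : ∀ a b, 0 ≤ c a b)
    {s t x y : V} {M : ℝ} (hM : 0 ≤ M) {S : Finset V} (hs : s ∈ S) (ht : t ∉ S)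
    (hxy : ¬(x ∈ S ∧ y ∉ S)) : M ≤ cutCap (withHighArcs c s t x y M) S := by
  have hnn := withHighArcs_nonneg hc s t x y hM
  by_cases hx : x ∈ S
  · have hy : y ∈ S := not_not.mp fun hy => hxy ⟨hx, hy⟩
    simpa [withHighArcs] using le_cutCap hnn hy ht
  · simpa [withHighArcs] using le_cutCap hnn hs hx

end HighArcs

theorem minCut_add_high_capacity_arcs_general {V : Type*} [Fintype V] [DecidableEq V]
    (c : V → V → ℝ) (hc : ∀ a b, 0 ≤ c a b) (s t x y : V) (hst : s ≠ t)
    (hxy : x ≠ y) (hxt : x ≠ t) (hys : y ≠ s)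
    (M : ℝ) (hM : ∑ a : V, ∑ b : V, c a b < M)
    -- G' : G with the four added arcs (x,s), (s,x), (y,t), (t,y) of capacity M
    (c' : V → V → ℝ)
    (hc' : c' = fun a b =>
      if (a, b) = (x, s) ∨ (a, b) = (s, x) ∨ (a, b) = (y, t) ∨ (a, b) = (t, y)
      then M else c a b) :
    (∀ S : Finset V, s ∈ S → t ∉ S → cutCap c' S = minCut c' s t → x ∈ S ∧ y ∉ S) ∧
      minCut c' s t = minCutCross c s t (x, y) := by
  obtain rfl : c' = withHighArcs c s t x y M := hc'
  have hM0 : 0 ≤ M := (sum_nonneg fun a _ => sum_nonneg fun b _ => hc a b).trans hM.le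
  have hs : s ∈ ({s, x} : Finset V) := by simp
  have ht : t ∉ ({s, x} : Finset V) := by simp [hst.symm, hxt.symm]
  have hx : x ∈ ({s, x} : Finset V) := by simp
  have hy : y ∉ ({s, x} : Finset V) := by simp [hys, hxy.symm]
  have hmin_lt : minCut (withHighArcs c s t x y M) s t < M :=
    calc _ ≤ cutCap (withHighArcs c s t x y M) {s, x} := minCut_le_cutCap _ hs ht
      _ = cutCap c {s, x} := cutCap_withHighArcs_of_cross c M hs ht hx hy
      _ ≤ ∑ a : V, ∑ b : V, c a b := cutCap_le_sum hc _
      _ < M := hM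
  have hcross : ∀ S : Finset V, s ∈ S → t ∉ S →
      cutCap (withHighArcs c s t x y M) S = minCut (withHighArcs c s t x y M) s t →
        x ∈ S ∧ y ∉ S := fun S hs ht hS => by_contra fun h =>
    (le_cutCap_withHighArcs_of_not_cross hc hM0 hs ht h).not_gt (hS ▸ hmin_lt)
  exact ⟨hcross, minCut_eq_minCutCross_of_minCuts_cross hst
    (fun _ hs ht hx hy => cutCap_withHighArcs_of_cross c M hs ht hx hy) hcross⟩

theorem minCut_add_high_capacity_arcs {V : Type*} [Fintype V] [DecidableEq V]
    (c : V → V → ℝ) (hc : ∀ a b, 0 ≤ c a b) (s t x y : V) (hst : s ≠ t)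
    (hxy : x ≠ y) (hxs : x ≠ s) (hxt : x ≠ t) (hys : y ≠ s) (hyt : y ≠ t)
    (M : ℝ) (hM : ∑ a : V, ∑ b : V, c a b < M)
    -- G' : G with the four added arcs (x,s), (s,x), (y,t), (t,y) of capacity M
    (c' : V → V → ℝ)
    (hc' : c' = fun a b =>
      if (a, b) = (x, s) ∨ (a, b) = (s, x) ∨ (a, b) = (y, t) ∨ (a, b) = (t, y)
      then M else c a b) :
    (∀ S : Finset V, s ∈ S → t ∉ S → cutCap c' S = minCut c' s t → x ∈ S ∧ y ∉ S) ∧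
      minCut c' s t = minCutCross c s t (x, y) :=
  minCut_add_high_capacity_arcs_general c hc s t x y hst hxy hxt hys M hM c' hc'
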